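/- There is no deterministic, 2-user-friendly TFM with finite block size that satisfies both weak UIC and 2-weak-SCP. That is, if a deterministic TFM with block size B < ∞ confirms at least two bids on some bid vector, then it violates weak UIC or 2-weak-SCP. -/

import Mathlib

/-- The 1-strict ("weak") utility of a single transaction with true value `v`,
bid `β`, confirmation indicator `conf ∈ {0,1}`, and payment `pay`: a confirmed
transaction yields `v − pay`, while an unconfirmed overbid of amount `β > v`
costs `β − v`. -/
noncomputable def weakUtil (v β conf pay : ℝ) : ℝ :=
  if conf = 1 then v - pay else -(max (β - v) 0)

/-- The joint 1-strict utility of the coalition of the miner and the users in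
`C` (with true values `v`), when the miner mines a block of `n` slots: slot `s`
carries bid `bids s` and is either a real user's transaction
(`owner s = some u`) or a fake transaction of the miner (`owner s = none`,
true value `0`).  The coalition receives the miner revenue, plus the 1-strict
utility of each coalition-owned transaction and of each fake transaction. -/
noncomputable def weakCoalitionUtility
    (x p : (n : ℕ) → (Fin n → ℝ) → Fin n → ℝ)
    (μ : (n : ℕ) → (Fin n → ℝ) → ℝ)
    (m : ℕ) (v : Fin m → ℝ) (C : Finset (Fin m))
    (n : ℕ) (owner : Fin n → Option (Fin m)) (bids : Fin n → ℝ) : ℝ :=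
  μ n bids + ∑ s : Fin n,
    (match owner s with
     | some u => if u ∈ C then weakUtil (v u) (bids s) (x n bids s) (p n bids s)
                 else 0
     | none => weakUtil 0 (bids s) (x n bids s) (p n bids s))

/-- Weak UIC: assuming the miner is honest, truthful bidding maximizes every
individual user's 1-strict utility. -/
def WeakUIC (x p : (n : ℕ) → (Fin n → ℝ) → Fin n → ℝ) : Prop :=
  ∀ (m : ℕ) (b : Fin m → ℝ) (i : Fin m) (r : ℝ),
    weakUtil (b i) r (x m (Function.update b i r) i) (p m (Function.update b i r) i)
      ≤ weakUtil (b i) (b i) (x m b i) (p m b i)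

/-- `c`-weak-SCP: no coalition of the miner and at least one and at most `c`
users can increase its joint 1-strict utility by any deviation — colluding
users bidding untruthfully, the miner injecting fake transactions, or the
miner assembling an arbitrary block (non-coalition users that are included
appear at most once, with their truthful bids). -/
def WeakSCP (c : ℕ)
    (x p : (n : ℕ) → (Fin n → ℝ) → Fin n → ℝ)
    (μ : (n : ℕ) → (Fin n → ℝ) → ℝ) : Prop :=
  ∀ (m : ℕ) (v : Fin m → ℝ) (C : Finset (Fin m)), C.Nonempty → C.card ≤ c →
    ∀ (n : ℕ) (owner : Fin n → Option (Fin m)) (bids : Fin n → ℝ),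
      (∀ s t u, owner s = some u → owner t = some u → s = t) →
      (∀ s u, owner s = some u → u ∉ C → bids s = v u) →
      weakCoalitionUtility x p μ m v C n owner bids
        ≤ weakCoalitionUtility x p μ m v C m (fun s => some s) v

noncomputable def mubarAux (c : ℝ) : ℕ → ℝ
  | 0 => 2 * c
  | n + 1 => mubarAux c n + 2 * (((n : ℝ) + 2) * (mubarAux c n + 2 * c) + 1 + 2 * c)

lemma mubarAux_nonneg {c : ℝ} (hc : 0 ≤ c) : ∀ n, 0 ≤ mubarAux c n := by
  intro n
  induction n with
  | zero => simp only [mubarAux]; linarith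
  | succ n ih =>
    have h2 : (0:ℝ) ≤ (n:ℝ) + 2 := by positivity
    simp only [mubarAux]
    nlinarith

lemma mubarAux_mono {c : ℝ} (hc : 0 ≤ c) : Monotone (mubarAux c) := by
  apply monotone_nat_of_le_succ
  intro n
  have h0 := mubarAux_nonneg hc n
  have h2 : (0:ℝ) ≤ (n:ℝ) + 2 := by positivity
  simp only [mubarAux]
  nlinarith

/-- a two-coordinate bid vector -/
noncomputable def pvec (N : ℕ) (a a' : Fin N) (g g' : ℝ) : Fin N → ℝ :=
  fun s => if s = a then g else if s = a' then g' else 0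

lemma pvec_fst {N : ℕ} (a a' : Fin N) (g g' : ℝ) : pvec N a a' g g' a = g := if_pos rfl

lemma pvec_snd {N : ℕ} {a a' : Fin N} (h : a ≠ a') (g g' : ℝ) : pvec N a a' g g' a' = g' := by
  simp [pvec, h.symm]

lemma pvec_other {N : ℕ} {a a' s : Fin N} (h1 : s ≠ a) (h2 : s ≠ a') (g g' : ℝ) :
    pvec N a a' g g' s = 0 := by simp [pvec, h1, h2]

lemma pvec_swap {N : ℕ} {a a' : Fin N} (h : a ≠ a') (g g' : ℝ) :
    pvec N a' a g' g = pvec N a a' g g' := by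
  funext s
  by_cases h1 : s = a <;> by_cases h2 : s = a' <;>
    simp_all [pvec]

lemma pvec_update_fst {N : ℕ} {a a' : Fin N} (h : a ≠ a') (g g' g2 : ℝ) :
    Function.update (pvec N a a' g g') a g2 = pvec N a a' g2 g' := by
  funext s
  by_cases h1 : s = a
  · subst h1; simp [pvec]
  · rw [Function.update_of_ne h1]; simp [pvec, h1]

lemma pvec_update_snd {N : ℕ} {a a' : Fin N} (h : a ≠ a') (g g' g2 : ℝ) :
    Function.update (pvec N a a' g g') a' g2 = pvec N a a' g g2 := by
  funext s
  by_cases h1 : s = a'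
  · subst h1; simp [pvec, h.symm, Function.update_self]
  · rw [Function.update_of_ne h1]; by_cases h2 : s = a <;> simp [pvec, h1, h2]

/-- the vector with bid `L` on the members of `F` and `0` elsewhere. -/
noncomputable def memVec (N : ℕ) (F : Finset (Fin N)) (L : ℝ) : Fin N → ℝ :=
  fun s => if s ∈ F then L else 0

lemma memVec_mem {N : ℕ} {F : Finset (Fin N)} {l : Fin N} (h : l ∈ F) (L : ℝ) :
    memVec N F L l = L := if_pos h

lemma memVec_not {N : ℕ} {F : Finset (Fin N)} {l : Fin N} (h : l ∉ F) (L : ℝ) :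
    memVec N F L l = 0 := if_neg h

lemma memVec_pair {N : ℕ} (z0 z1 : Fin N) (L : ℝ) :
    memVec N {z0, z1} L = pvec N z0 z1 L L := by
  funext s
  by_cases h1 : s = z0 <;> by_cases h2 : s = z1 <;> simp [memVec, pvec, h1, h2]

lemma memVec_insert {N : ℕ} {F : Finset (Fin N)} {k : Fin N} (L : ℝ) :
    Function.update (memVec N F L) k L = memVec N (insert k F) L := by
  funext s
  by_cases h1 : s = k
  · subst h1; simp [memVec]
  · rw [Function.update_of_ne h1]; simp [memVec, h1]

set_option maxHeartbeats 2000000 in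
/-- **Impossibility for deterministic 2-user-friendly TFMs with finite blocks.**
There is no deterministic TFM with finite block size `B` (at most `B` bids ever
confirmed) that confirms at least two bids on some bid vector
(2-user-friendliness) and satisfies both weak UIC and 2-weak-SCP. -/
theorem no_deterministic_two_user_friendly_weak_uic_scp
    (B : ℕ)
    (x p : (n : ℕ) → (Fin n → ℝ) → Fin n → ℝ)
    (μ : (n : ℕ) → (Fin n → ℝ) → ℝ)
    (hx01 : ∀ n (b : Fin n → ℝ) (i : Fin n), x n b i = 0 ∨ x n b i = 1)
    (hple : ∀ n (b : Fin n → ℝ) (i : Fin n), x n b i = 1 → p n b i ≤ b i)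
    (hp0 : ∀ n (b : Fin n → ℝ) (i : Fin n), x n b i = 0 → p n b i = 0)
    (hμ : ∀ n (b : Fin n → ℝ), 0 ≤ μ n b ∧ μ n b ≤ ∑ i, p n b i)
    -- finite block size: at most B bids are ever confirmed
    (hblock : ∀ n (b : Fin n → ℝ),
      (Finset.univ.filter (fun i : Fin n => x n b i = 1)).card ≤ B)
    -- 2-user-friendly: some bid vector confirms at least two bids
    (hfriendly : ∃ (m : ℕ) (b : Fin m → ℝ) (i j : Fin m),
      i ≠ j ∧ x m b i = 1 ∧ x m b j = 1)
    (hUIC : WeakUIC x p)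
    (hSCP : WeakSCP 2 x p μ) :
    False := by
  classical
  obtain ⟨m, b, i, j, hij, hxi, hxj⟩ := hfriendly
  -- basic helpers --------------------------------------------------------
  have hx0 : ∀ n (v : Fin n → ℝ) s, x n v s ≠ 1 → x n v s = 0 :=
    fun n v s h => (hx01 n v s).resolve_right h
  have wU1 : ∀ (v β q : ℝ), weakUtil v β 1 q = v - q := by
    intro v β q; simp [weakUtil]
  have wUn : ∀ (v β c q : ℝ), c ≠ 1 → weakUtil v β c q = -(max (β - v) 0) := by
    intro v β c q h; simp [weakUtil, h]
  have wUzero : ∀ (v c q : ℝ), c ≠ 1 → weakUtil v v c q = 0 := by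
    intro v c q h; rw [wUn _ _ _ _ h]; simp
  have hne1 : ∀ r : ℝ, r = 0 → r ≠ 1 := by
    intro r h; rw [h]; exact zero_ne_one
  have hple0 : ∀ n (v : Fin n → ℝ) s, v s = 0 → p n v s ≤ 0 := by
    intro n v s hv
    rcases hx01 n v s with h | h
    · rw [hp0 n v s h]
    · have := hple n v s h; rw [hv] at this; exact this
  have hpbid : ∀ n (v : Fin n → ℝ) s (c : ℝ), v s = c → 0 ≤ c → p n v s ≤ c := by
    intro n v s c hv hc
    rcases hx01 n v s with h | h
    · rw [hp0 n v s h]; exact hc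
    · have := hple n v s h; rw [hv] at this; exact this
  -- block size at least 2 -------------------------------------------------
  have hB2 : 2 ≤ B := by
    have hsub : ({i, j} : Finset (Fin m)) ⊆ Finset.univ.filter (fun s => x m b s = 1) := by
      intro s hs
      rcases Finset.mem_insert.mp hs with h | h
      · subst h; exact Finset.mem_filter.mpr ⟨Finset.mem_univ _, hxi⟩
      · rw [Finset.mem_singleton] at h; subst h
        exact Finset.mem_filter.mpr ⟨Finset.mem_univ _, hxj⟩
    calc 2 = ({i, j} : Finset (Fin m)).card := (Finset.card_pair hij).symm
      _ ≤ (Finset.univ.filter (fun s => x m b s = 1)).card := Finset.card_le_card hsub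
      _ ≤ B := hblock m b
  set N := B + 1 with hNdef
  obtain ⟨z0, z1, hz01⟩ : ∃ a a' : Fin N, a ≠ a' := by
    refine ⟨⟨0, by omega⟩, ⟨1, by omega⟩, ?_⟩
    simp [Fin.ext_iff]
  -- the constant K --------------------------------------------------------
  set SK := ∑ s ∈ (Finset.univ.erase i).erase j, max (b s) 0 with hSKdef
  set K := p m b i + p m b j + SK with hKdef
  have hSK0 : 0 ≤ SK := Finset.sum_nonneg (fun s _ => le_max_right _ _)
  have hK0 : 0 ≤ K := by
    have h1 := (hμ m b).1
    have h2 := (hμ m b).2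
    have h3 : (∑ s, p m b s) = p m b i + (p m b j + ∑ s ∈ (Finset.univ.erase i).erase j, p m b s) := by
      rw [Finset.add_sum_erase _ _ (Finset.mem_erase.mpr ⟨hij.symm, Finset.mem_univ j⟩),
        Finset.add_sum_erase _ _ (Finset.mem_univ i)]
    have h4 : ∑ s ∈ (Finset.univ.erase i).erase j, p m b s ≤ SK := by
      rw [hSKdef]
      refine Finset.sum_le_sum (fun s _ => ?_)
      rcases hx01 m b s with h | h
      · rw [hp0 m b s h]; exact le_max_right _ _
      · exact le_trans (hple m b s h) (le_max_left _ _)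
    rw [h3] at h2
    rw [hKdef]; linarith
  set K1 := K + 1 with hK1def
  have hK10 : (0:ℝ) ≤ K1 := by rw [hK1def]; linarith
  -- Lemma R: raising a confirmed bid keeps it confirmed at the same payment
  have LemR : ∀ (n : ℕ) (v : Fin n → ℝ) (l : Fin n) (r : ℝ), x n v l = 1 → p n v l < r →
      x n (Function.update v l r) l = 1 ∧ p n (Function.update v l r) l = p n v l := by
    intro n v l r hc hr
    have h1 := hUIC n (Function.update v l r) l (v l)
    rw [Function.update_idem, Function.update_eq_self, Function.update_self] at h1
    rw [hc, wU1] at h1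
    by_cases hc' : x n (Function.update v l r) l = 1
    · rw [hc', wU1] at h1
      have h2 := hUIC n v l r
      rw [hc', hc, wU1, wU1] at h2
      exact ⟨hc', by linarith⟩
    · exfalso
      rw [wUn _ _ _ _ hc'] at h1
      simp only [sub_self, max_self, neg_zero] at h1
      linarith
  -- honest coalition utilities -------------------------------------------
  have honest_pair : ∀ (v : Fin N → ℝ) (a a' : Fin N), a ≠ a' →
      weakCoalitionUtility x p μ N v {a, a'} N (fun s => some s) v
        = μ N v + (weakUtil (v a) (v a) (x N v a) (p N v a)
            + weakUtil (v a') (v a') (x N v a') (p N v a')) := by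
    intro v a a' h
    rw [show weakCoalitionUtility x p μ N v {a, a'} N (fun s => some s) v
        = μ N v + ∑ s : Fin N, (if s ∈ ({a, a'} : Finset (Fin N)) then
            weakUtil (v s) (v s) (x N v s) (p N v s) else 0) from rfl,
      Finset.sum_ite_mem, Finset.univ_inter, Finset.sum_pair h]
  have honest_single : ∀ (v : Fin N → ℝ) (k : Fin N),
      weakCoalitionUtility x p μ N v {k} N (fun s => some s) v
        = μ N v + weakUtil (v k) (v k) (x N v k) (p N v k) := by
    intro v k
    rw [show weakCoalitionUtility x p μ N v {k} N (fun s => some s) v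
        = μ N v + ∑ s : Fin N, (if s ∈ ({k} : Finset (Fin N)) then
            weakUtil (v s) (v s) (x N v s) (p N v s) else 0) from rfl]
    congr 1
    simp only [Finset.mem_singleton]
    rw [Finset.sum_ite_eq' Finset.univ k (fun s => weakUtil (v s) (v s) (x N v s) (p N v s)),
      if_pos (Finset.mem_univ k)]
  -- Lemma P: the first coordinate of a high two-coordinate vector is confirmed
  have LP : ∀ (a a' : Fin N), a ≠ a' → ∀ (ga gb : ℝ), K < ga → K < gb →
      x N (pvec N a a' ga gb) a = 1 := by
    intro a a' haa ga gb hga hgb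
    by_contra hcon
    set c : Fin N → ℝ := pvec N a a' ga gb with hcdef
    have hc0 : x N c a = 0 := hx0 _ _ _ hcon
    have hca : c a = ga := pvec_fst a a' ga gb
    have hca' : c a' = gb := pvec_snd haa ga gb
    have hmemA : a ∈ ({a, a'} : Finset (Fin N)) := Finset.mem_insert_self a {a'}
    have hmemA' : a' ∈ ({a, a'} : Finset (Fin N)) := by simp
    have hscp := hSCP N c {a, a'} ⟨a, hmemA⟩ (le_of_eq (Finset.card_pair haa)) m
      (fun s => if s = i then some a else if s = j then some a' else none) b
      (by
        intro s t u hs ht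
        by_cases h1 : s = i
        · rw [if_pos h1] at hs
          by_cases h3 : t = i
          · rw [h1, h3]
          · rw [if_neg h3] at ht
            by_cases h4 : t = j
            · rw [if_pos h4] at ht
              exact absurd ((Option.some.inj hs).trans (Option.some.inj ht).symm) haa
            · rw [if_neg h4] at ht; exact absurd ht (by simp)
        · rw [if_neg h1] at hs
          by_cases h2 : s = j
          · rw [if_pos h2] at hs
            by_cases h3 : t = i
            · rw [if_pos h3] at ht
              exact absurd ((Option.some.inj ht).trans (Option.some.inj hs).symm) haa
            · rw [if_neg h3] at ht
              by_cases h4 : t = j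
              · rw [h2, h4]
              · rw [if_neg h4] at ht; exact absurd ht (by simp)
          · rw [if_neg h2] at hs; exact absurd hs (by simp))
      (by
        intro s u hs hu
        exfalso; apply hu
        by_cases h1 : s = i
        · rw [if_pos h1] at hs; rw [← Option.some.inj hs]; exact hmemA
        · by_cases h2 : s = j
          · rw [if_neg h1, if_pos h2] at hs; rw [← Option.some.inj hs]; exact hmemA'
          · rw [if_neg h1, if_neg h2] at hs; exact absurd hs (by simp))
    -- lower bound on the deviating utility
    have hsum : ∑ s : Fin m, (if s = i then ga - p m b i else if s = j then gb - p m b j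
          else -(max (b s) 0))
        ≤ ∑ s : Fin m,
        (match (if s = i then some a else if s = j then some a' else none : Option (Fin N)) with
         | some u => if u ∈ ({a, a'} : Finset (Fin N)) then
             weakUtil (c u) (b s) (x m b s) (p m b s) else 0
         | none => weakUtil 0 (b s) (x m b s) (p m b s)) := by
      refine Finset.sum_le_sum (fun s _ => ?_)
      by_cases h1 : s = i
      · subst h1
        rw [if_pos rfl, if_pos rfl]
        show ga - p m b s ≤ (if a ∈ ({a, a'} : Finset (Fin N)) then
             weakUtil (c a) (b s) (x m b s) (p m b s) else 0)
        rw [if_pos hmemA, hca, hxi, wU1]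
      · by_cases h2 : s = j
        · subst h2
          rw [if_neg h1, if_pos rfl, if_neg h1, if_pos rfl]
          show gb - p m b s ≤ (if a' ∈ ({a, a'} : Finset (Fin N)) then
               weakUtil (c a') (b s) (x m b s) (p m b s) else 0)
          rw [if_pos hmemA', hca', hxj, wU1]
        · rw [if_neg h1, if_neg h2, if_neg h1, if_neg h2]
          show -(max (b s) 0) ≤ weakUtil 0 (b s) (x m b s) (p m b s)
          rcases hx01 m b s with h | h
          · rw [wUn _ _ _ _ (hne1 _ h), sub_zero]
          · rw [h, wU1]
            have h5 := hple m b s h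
            have h6 : b s ≤ max (b s) 0 := le_max_left _ _
            linarith
    have hsplit : ∑ s : Fin m, (if s = i then ga - p m b i else if s = j then gb - p m b j
          else -(max (b s) 0))
        = (ga - p m b i) + ((gb - p m b j)
            + ∑ s ∈ (Finset.univ.erase i).erase j, -(max (b s) 0)) := by
      rw [← Finset.add_sum_erase _ _ (Finset.mem_univ i), if_pos rfl]
      congr 1
      rw [← Finset.add_sum_erase _ _ (Finset.mem_erase.mpr ⟨hij.symm, Finset.mem_univ j⟩),
        if_neg hij.symm, if_pos rfl]
      congr 1
      refine Finset.sum_congr rfl (fun s hs => ?_)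
      have h1 : s ≠ j := (Finset.mem_erase.mp hs).1
      have h2 : s ≠ i := (Finset.mem_erase.mp (Finset.mem_erase.mp hs).2).1
      rw [if_neg h2, if_neg h1]
    have hnegsum : ∑ s ∈ (Finset.univ.erase i).erase j, -(max (b s) 0) = -SK := by
      rw [hSKdef, ← Finset.sum_neg_distrib]
    have hdev : ga + gb - K ≤
        weakCoalitionUtility x p μ N c {a, a'} m
          (fun s => if s = i then some a else if s = j then some a' else none) b := by
      rw [show weakCoalitionUtility x p μ N c {a, a'} m
          (fun s => if s = i then some a else if s = j then some a' else none) b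
        = μ m b + ∑ s : Fin m,
          (match (if s = i then some a else if s = j then some a' else none : Option (Fin N)) with
           | some u => if u ∈ ({a, a'} : Finset (Fin N)) then
               weakUtil (c u) (b s) (x m b s) (p m b s) else 0
           | none => weakUtil 0 (b s) (x m b s) (p m b s)) from rfl]
      have hμb := (hμ m b).1
      rw [hsplit, hnegsum] at hsum
      rw [hKdef]
      linarith
    -- upper bound on the honest utility
    have hhon := honest_pair c a a' haa
    have hμc := (hμ N c).2
    have hsum2 : (∑ s, p N c s) = p N c a' + ∑ s ∈ Finset.univ.erase a', p N c s :=
      (Finset.add_sum_erase _ _ (Finset.mem_univ a')).symm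
    have hrest : ∑ s ∈ Finset.univ.erase a', p N c s ≤ 0 := by
      refine Finset.sum_nonpos (fun s hs => ?_)
      have hsa' : s ≠ a' := (Finset.mem_erase.mp hs).1
      by_cases h1 : s = a
      · subst h1; exact le_of_eq (hp0 N c s hc0)
      · exact hple0 N c s (pvec_other h1 hsa' ga gb)
    have hUa : weakUtil (c a) (c a) (x N c a) (p N c a) = 0 :=
      wUzero _ _ _ (hne1 _ hc0)
    have hhonle : weakCoalitionUtility x p μ N c {a, a'} N (fun s => some s) c ≤ gb := by
      rw [hhon, hUa]
      rcases hx01 N c a' with h | h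
      · rw [wUzero _ _ _ (hne1 _ h)]
        have h7 : p N c a' = 0 := hp0 N c a' h
        rw [hsum2, h7] at hμc
        linarith
      · rw [h, wU1, hca']
        rw [hsum2] at hμc
        linarith
    have := le_trans hdev (le_trans hscp hhonle)
    linarith
  -- the fixed witness block cstar ----------------------------------------
  have hKK1 : K < K + 1 := by linarith
  have hKK2 : K < K + 2 := by linarith
  set cstar : Fin N → ℝ := pvec N z0 z1 (K + 2) (K + 2) with hcstardef
  obtain ⟨hcs0, hπ0⟩ : x N cstar z0 = 1 ∧ p N cstar z0 ≤ K1 := by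
    have hxw1 : x N (pvec N z0 z1 (K + 1) (K + 2)) z0 = 1 := LP z0 z1 hz01 _ _ hKK1 hKK2
    have hq0 : p N (pvec N z0 z1 (K + 1) (K + 2)) z0 ≤ K + 1 := by
      have := hple N _ z0 hxw1
      rwa [pvec_fst] at this
    have hupd : Function.update (pvec N z0 z1 (K + 1) (K + 2)) z0 (K + 2) = cstar := by
      rw [pvec_update_fst hz01]
    obtain ⟨h1, h2⟩ := LemR N _ z0 (K + 2) hxw1 (by linarith)
    rw [hupd] at h1 h2
    exact ⟨h1, by rw [h2, hK1def]; exact hq0⟩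
  obtain ⟨hcs1, hπ1⟩ : x N cstar z1 = 1 ∧ p N cstar z1 ≤ K1 := by
    have hveq : pvec N z1 z0 (K + 1) (K + 2) = pvec N z0 z1 (K + 2) (K + 1) :=
      pvec_swap hz01 (K + 2) (K + 1)
    have hxw2 : x N (pvec N z0 z1 (K + 2) (K + 1)) z1 = 1 := by
      rw [← hveq]; exact LP z1 z0 hz01.symm _ _ hKK1 hKK2
    have hq1 : p N (pvec N z0 z1 (K + 2) (K + 1)) z1 ≤ K + 1 := by
      have := hple N _ z1 hxw2
      rwa [pvec_snd hz01] at this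
    have hupd : Function.update (pvec N z0 z1 (K + 2) (K + 1)) z1 (K + 2) = cstar := by
      rw [pvec_update_snd hz01]
    obtain ⟨h1, h2⟩ := LemR N _ z1 (K + 2) hxw2 (by linarith)
    rw [hupd] at h1 h2
    exact ⟨h1, by rw [h2, hK1def]; exact hq1⟩
  have hcso : ∀ s : Fin N, s ≠ z0 → s ≠ z1 → cstar s = 0 :=
    fun s h1 h2 => pvec_other h1 h2 _ _
  have hcsz0 : cstar z0 = K + 2 := pvec_fst z0 z1 _ _
  have hcsz1 : cstar z1 = K + 2 := pvec_snd hz01 _ _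
  have hμcstar : μ N cstar ≤ 2 * K1 := by
    have h1 := (hμ N cstar).2
    have h2 : (∑ s, p N cstar s) = p N cstar z0 + (p N cstar z1
        + ∑ s ∈ (Finset.univ.erase z0).erase z1, p N cstar s) := by
      rw [Finset.add_sum_erase _ _ (Finset.mem_erase.mpr ⟨hz01.symm, Finset.mem_univ z1⟩),
        Finset.add_sum_erase _ _ (Finset.mem_univ z0)]
    have h3 : ∑ s ∈ (Finset.univ.erase z0).erase z1, p N cstar s ≤ 0 := by
      refine Finset.sum_nonpos (fun s hs => ?_)
      exact hple0 N cstar s (hcso s (Finset.mem_erase.mp (Finset.mem_erase.mp hs).2).1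
        (Finset.mem_erase.mp hs).1)
    rw [h2] at h1; linarith
  -- GOLD: fundamental SCP lower bound on honest coalition utilities --------
  have gold : ∀ (v : Fin N → ℝ) (a a' : Fin N), a ≠ a' →
      v a + v a' - 2 * K1 ≤ μ N v
        + weakUtil (v a) (v a) (x N v a) (p N v a)
        + weakUtil (v a') (v a') (x N v a') (p N v a') := by
    intro v a a' haa
    have hmemA : a ∈ ({a, a'} : Finset (Fin N)) := Finset.mem_insert_self a {a'}
    have hmemA' : a' ∈ ({a, a'} : Finset (Fin N)) := by simp
    have hscp := hSCP N v {a, a'} ⟨a, hmemA⟩ (le_of_eq (Finset.card_pair haa)) N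
      (fun s => if s = z0 then some a else if s = z1 then some a' else none) cstar
      (by
        intro s t u hs ht
        by_cases h1 : s = z0
        · rw [if_pos h1] at hs
          by_cases h3 : t = z0
          · rw [h1, h3]
          · rw [if_neg h3] at ht
            by_cases h4 : t = z1
            · rw [if_pos h4] at ht
              exact absurd ((Option.some.inj hs).trans (Option.some.inj ht).symm) haa
            · rw [if_neg h4] at ht; exact absurd ht (by simp)
        · rw [if_neg h1] at hs
          by_cases h2 : s = z1
          · rw [if_pos h2] at hs
            by_cases h3 : t = z0
            · rw [if_pos h3] at ht
              exact absurd ((Option.some.inj ht).trans (Option.some.inj hs).symm) haa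
            · rw [if_neg h3] at ht
              by_cases h4 : t = z1
              · rw [h2, h4]
              · rw [if_neg h4] at ht; exact absurd ht (by simp)
          · rw [if_neg h2] at hs; exact absurd hs (by simp))
      (by
        intro s u hs hu
        exfalso; apply hu
        by_cases h1 : s = z0
        · rw [if_pos h1] at hs; rw [← Option.some.inj hs]; exact hmemA
        · by_cases h2 : s = z1
          · rw [if_neg h1, if_pos h2] at hs; rw [← Option.some.inj hs]; exact hmemA'
          · rw [if_neg h1, if_neg h2] at hs; exact absurd hs (by simp))
    rw [honest_pair v a a' haa] at hscp
    have hsum : ∑ s : Fin N, ((if s = z0 then v a - K1 else 0) + (if s = z1 then v a' - K1 else 0))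
        ≤ ∑ s : Fin N,
        (match (if s = z0 then some a else if s = z1 then some a' else none : Option (Fin N)) with
         | some u => if u ∈ ({a, a'} : Finset (Fin N)) then
             weakUtil (v u) (cstar s) (x N cstar s) (p N cstar s) else 0
         | none => weakUtil 0 (cstar s) (x N cstar s) (p N cstar s)) := by
      refine Finset.sum_le_sum (fun s _ => ?_)
      by_cases h1 : s = z0
      · subst h1
        rw [if_pos rfl, if_neg hz01, add_zero, if_pos rfl]
        show v a - K1 ≤ (if a ∈ ({a, a'} : Finset (Fin N)) then
            weakUtil (v a) (cstar s) (x N cstar s) (p N cstar s) else 0)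
        rw [if_pos hmemA, hcs0, wU1]
        linarith [hπ0]
      · by_cases h2 : s = z1
        · subst h2
          rw [if_neg h1, if_pos rfl, zero_add, if_neg h1, if_pos rfl]
          show v a' - K1 ≤ (if a' ∈ ({a, a'} : Finset (Fin N)) then
              weakUtil (v a') (cstar s) (x N cstar s) (p N cstar s) else 0)
          rw [if_pos hmemA', hcs1, wU1]
          linarith [hπ1]
        · rw [if_neg h1, if_neg h2, add_zero, if_neg h1, if_neg h2]
          show (0:ℝ) ≤ weakUtil 0 (cstar s) (x N cstar s) (p N cstar s)
          rcases hx01 N cstar s with h | h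
          · rw [wUn _ _ _ _ (hne1 _ h), hcso s h1 h2, sub_zero]
            simp
          · rw [h, wU1]
            have h5 := hple N cstar s h
            rw [hcso s h1 h2] at h5
            linarith
    have hLHS : ∑ s : Fin N, ((if s = z0 then v a - K1 else 0) + (if s = z1 then v a' - K1 else 0))
        = (v a - K1) + (v a' - K1) := by
      rw [Finset.sum_add_distrib, Finset.sum_ite_eq' Finset.univ z0 (fun _ => v a - K1),
        Finset.sum_ite_eq' Finset.univ z1 (fun _ => v a' - K1),
        if_pos (Finset.mem_univ z0), if_pos (Finset.mem_univ z1)]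
    have hdev : (v a - K1) + (v a' - K1) ≤
        weakCoalitionUtility x p μ N v {a, a'} N
          (fun s => if s = z0 then some a else if s = z1 then some a' else none) cstar := by
      rw [show weakCoalitionUtility x p μ N v {a, a'} N
          (fun s => if s = z0 then some a else if s = z1 then some a' else none) cstar
        = μ N cstar + ∑ s : Fin N,
          (match (if s = z0 then some a else if s = z1 then some a' else none : Option (Fin N)) with
           | some u => if u ∈ ({a, a'} : Finset (Fin N)) then
               weakUtil (v u) (cstar s) (x N cstar s) (p N cstar s) else 0
           | none => weakUtil 0 (cstar s) (x N cstar s) (p N cstar s)) from rfl]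
      have h6 := (hμ N cstar).1
      rw [hLHS] at hsum
      linarith
    linarith [le_trans hdev hscp]
  -- RAISE: changing one bid ------------------------------------------------
  have raise : ∀ (v : Fin N → ℝ) (k : Fin N) (r : ℝ),
      μ N (Function.update v k r)
        + weakUtil (v k) r (x N (Function.update v k r) k) (p N (Function.update v k r) k)
      ≤ μ N v + weakUtil (v k) (v k) (x N v k) (p N v k) := by
    intro v k r
    have hscp := hSCP N v {k} ⟨k, Finset.mem_singleton_self k⟩ (by simp) N
      (fun s => some s) (Function.update v k r)
      (by
        intro s t u hs ht
        rw [Option.some.inj hs, Option.some.inj ht])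
      (by
        intro s u hs hu
        have h1 : s = u := Option.some.inj hs
        subst h1
        refine Function.update_of_ne ?_ r v
        intro h
        exact hu (by rw [h]; exact Finset.mem_singleton_self k))
    rw [honest_single v k] at hscp
    rw [show weakCoalitionUtility x p μ N v {k} N (fun s => some s) (Function.update v k r)
        = μ N (Function.update v k r) + ∑ s : Fin N, (if s ∈ ({k} : Finset (Fin N)) then
            weakUtil (v s) (Function.update v k r s) (x N (Function.update v k r) s)
              (p N (Function.update v k r) s) else 0) from rfl] at hscp
    have hsum : ∑ s : Fin N, (if s ∈ ({k} : Finset (Fin N)) then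
            weakUtil (v s) (Function.update v k r s) (x N (Function.update v k r) s)
              (p N (Function.update v k r) s) else 0)
        = weakUtil (v k) r (x N (Function.update v k r) k) (p N (Function.update v k r) k) := by
      simp only [Finset.mem_singleton]
      rw [Finset.sum_ite_eq' Finset.univ k (fun s =>
        weakUtil (v s) (Function.update v k r s) (x N (Function.update v k r) s)
          (p N (Function.update v k r) s)), if_pos (Finset.mem_univ k), Function.update_self]
    rw [hsum] at hscp
    exact hscp
  -- the scale Λ -------------------------------------------------------------
  set Lam : ℝ := mubarAux K1 (B - 1) + 2 * K1 + K + 3 with hLamdef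
  have hmubB1 : (0:ℝ) ≤ mubarAux K1 (B - 1) := mubarAux_nonneg hK10 (B - 1)
  have hLam0 : 0 ≤ Lam := by rw [hLamdef]; linarith
  have hLamK : K < Lam := by rw [hLamdef]; linarith
  have hLamK2 : K + 2 < Lam := by rw [hLamdef, hK1def]; linarith
  have hK1Lam : K1 < Lam := by rw [hK1def]; linarith
  have hLamBig : ∀ n, n ≤ B - 1 → mubarAux K1 n + 2 * K1 < Lam := by
    intro n hn
    have := mubarAux_mono hK10 hn
    rw [hLamdef]; linarith
  -- the base case ------------------------------------------------------------
  have hbase_conf : ∀ l ∈ ({z0, z1} : Finset (Fin N)), x N (memVec N {z0, z1} Lam) l = 1 := by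
    intro l hl
    rw [memVec_pair]
    rcases Finset.mem_insert.mp hl with h | h
    · rw [h]; exact LP z0 z1 hz01 Lam Lam hLamK hLamK
    · rw [Finset.mem_singleton] at h; rw [h]
      rw [← pvec_swap hz01 Lam Lam]
      exact LP z1 z0 hz01.symm Lam Lam hLamK hLamK
  have hbase_mu : μ N (memVec N {z0, z1} Lam) ≤ mubarAux K1 0 := by
    obtain ⟨hxw3, hpw3⟩ := LemR N cstar z0 Lam hcs0 (lt_of_le_of_lt hπ0 hK1Lam)
    have hw3eq : Function.update cstar z0 Lam = pvec N z0 z1 Lam (K + 2) := by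
      rw [hcstardef, pvec_update_fst hz01]
    rw [hw3eq] at hxw3 hpw3
    have hr1 := raise cstar z0 Lam
    rw [hw3eq, hxw3, hpw3, hcsz0, hcs0, wU1, wU1] at hr1
    have hμw3 : μ N (pvec N z0 z1 Lam (K + 2)) ≤ μ N cstar := by linarith
    have hxw4 : x N (pvec N z0 z1 Lam (K + 2)) z1 = 1 := by
      rw [← pvec_swap hz01 Lam (K + 2)]
      exact LP z1 z0 hz01.symm (K + 2) Lam hKK2 hLamK
    have hq4 : p N (pvec N z0 z1 Lam (K + 2)) z1 ≤ K + 2 := by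
      have := hple N _ z1 hxw4; rwa [pvec_snd hz01] at this
    obtain ⟨hxv2, hpv2⟩ := LemR N (pvec N z0 z1 Lam (K + 2)) z1 Lam hxw4
      (lt_of_le_of_lt hq4 hLamK2)
    have hv2eq : Function.update (pvec N z0 z1 Lam (K + 2)) z1 Lam = pvec N z0 z1 Lam Lam :=
      pvec_update_snd hz01 Lam (K + 2) Lam
    rw [hv2eq] at hxv2 hpv2
    have hr2 := raise (pvec N z0 z1 Lam (K + 2)) z1 Lam
    rw [hv2eq, hxv2, hpv2, pvec_snd hz01, hxw4, wU1, wU1] at hr2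
    have hμfin : μ N (pvec N z0 z1 Lam Lam) ≤ μ N cstar := by linarith
    rw [memVec_pair z0 z1 Lam]
    have h0 : mubarAux K1 0 = 2 * K1 := rfl
    rw [h0]
    linarith [hμcstar]
  -- the inductive step -------------------------------------------------------
  have step : ∀ F : Finset (Fin N), 2 ≤ F.card → F.card ≤ B →
      (∀ l ∈ F, x N (memVec N F Lam) l = 1) →
      μ N (memVec N F Lam) ≤ mubarAux K1 (F.card - 2) →
      ∃ F' : Finset (Fin N), F'.card = F.card + 1 ∧
        (∀ l ∈ F', x N (memVec N F' Lam) l = 1) ∧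
        μ N (memVec N F' Lam) ≤ mubarAux K1 (F'.card - 2) := by
    intro F hF2 hFB hFconf hFmu
    set vF : Fin N → ℝ := memVec N F Lam with hvFdef
    have htR : (2:ℝ) ≤ (F.card : ℝ) := by exact_mod_cast hF2
    have hmubt : (0:ℝ) ≤ mubarAux K1 (F.card - 2) := mubarAux_nonneg hK10 _
    -- pick an unconfirmed non-member k
    obtain ⟨k, hkF, hkx⟩ : ∃ k : Fin N, k ∉ F ∧ x N vF k = 0 := by
      by_contra hcon
      push_neg at hcon
      have hall : Finset.univ.filter (fun s : Fin N => x N vF s = 1) = Finset.univ := by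
        apply Finset.eq_univ_of_forall
        intro s
        rw [Finset.mem_filter]
        refine ⟨Finset.mem_univ s, ?_⟩
        by_cases hs : s ∈ F
        · exact hFconf s hs
        · rcases hx01 N vF s with h | h
          · exact absurd h (hcon s hs)
          · exact h
      have hbl := hblock N vF
      rw [hall, Finset.card_univ, Fintype.card_fin] at hbl
      omega
    have hvFk : vF k = 0 := memVec_not hkF Lam
    obtain ⟨l0, hl0F⟩ := Finset.card_pos.mp (by omega : 0 < F.card)
    have hl0k : l0 ≠ k := ne_of_mem_of_not_mem hl0F hkF
    set W0 : ℝ := ((F.card : ℝ) + 1) * Lam + 2 * K1 + 1 with hW0def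
    set v2 : Fin N → ℝ := Function.update vF k W0 with hv2def
    have hv2k : v2 k = W0 := Function.update_self k W0 vF
    have hv2F : ∀ l ∈ F, v2 l = Lam := by
      intro l hl
      rw [hv2def, Function.update_of_ne (ne_of_mem_of_not_mem hl hkF), hvFdef, memVec_mem hl]
    have hv2o : ∀ s : Fin N, s ∉ F → s ≠ k → v2 s = 0 := by
      intro s hs hsk
      rw [hv2def, Function.update_of_ne hsk, hvFdef, memVec_not hs]
    -- forcing: k is confirmed at v2
    have hxk2 : x N v2 k = 1 := by
      by_contra hcon
      have hk0 : x N v2 k = 0 := hx0 _ _ _ hcon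
      have hμ2 := (hμ N v2).2
      have hsplit : (∑ s, p N v2 s) = p N v2 l0 + ∑ s ∈ Finset.univ.erase l0, p N v2 s :=
        (Finset.add_sum_erase _ _ (Finset.mem_univ l0)).symm
      have hrest : ∑ s ∈ Finset.univ.erase l0, p N v2 s
          ≤ ∑ s ∈ Finset.univ.erase l0, (if s ∈ F then Lam else 0) := by
        refine Finset.sum_le_sum (fun s _ => ?_)
        by_cases h1 : s ∈ F
        · rw [if_pos h1]; exact hpbid N v2 s Lam (hv2F s h1) hLam0
        · rw [if_neg h1]
          by_cases h2 : s = k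
          · rw [h2]; exact le_of_eq (hp0 N v2 k hk0)
          · exact hple0 N v2 s (hv2o s h1 h2)
      have hiftot : ∑ s : Fin N, (if s ∈ F then Lam else 0) = (F.card : ℝ) * Lam := by
        rw [Finset.sum_ite_mem, Finset.univ_inter, Finset.sum_const, nsmul_eq_mul]
      have hifl0 : ∑ s ∈ Finset.univ.erase l0, (if s ∈ F then Lam else 0)
          = (F.card : ℝ) * Lam - Lam := by
        have haux := Finset.add_sum_erase Finset.univ
          (fun s => if s ∈ F then Lam else 0) (Finset.mem_univ l0)
        rw [if_pos hl0F, hiftot] at haux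
        linarith
      have hg := gold v2 l0 k hl0k
      rw [hv2k, hv2F l0 hl0F,
        wUzero _ _ _ (hne1 _ hk0)] at hg
      rcases hx01 N v2 l0 with h | h
      · rw [wUzero _ _ _ (hne1 _ h)] at hg
        have hpl0 : p N v2 l0 = 0 := hp0 N v2 l0 h
        rw [hsplit, hpl0] at hμ2
        rw [hW0def] at hg
        linarith
      · rw [h, wU1] at hg
        rw [hsplit] at hμ2
        rw [hW0def] at hg
        linarith
    have hτW0 : p N v2 k ≤ W0 := by
      have := hple N v2 k hxk2; rwa [hv2k] at this
    -- μ v2 - τ ≤ μ vF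
    have hraise2 : μ N v2 - p N v2 k ≤ μ N vF := by
      have hr := raise vF k W0
      rw [← hv2def, hvFk, hxk2, wU1,
        wUzero _ _ _ (hne1 _ hkx)] at hr
      linarith
    -- every member stays confirmed at v2
    have hFv2 : ∀ l ∈ F, x N v2 l = 1 := by
      intro l hl
      by_contra hcon
      have h0 : x N v2 l = 0 := hx0 _ _ _ hcon
      have hlk : l ≠ k := ne_of_mem_of_not_mem hl hkF
      have hg := gold v2 l k hlk
      rw [hv2k, hv2F l hl, hxk2, wU1,
        wUzero _ _ _ (hne1 _ h0)] at hg
      have hLamle := hLamBig (F.card - 2) (by omega)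
      linarith [hraise2, hFmu]
    -- bound μ v2 by a constant
    have hBND : μ N v2 ≤ (F.card : ℝ) * (mubarAux K1 (F.card - 2) + 2 * K1) + 1 := by
      by_cases hτ1 : p N v2 k < 1
      · have hstep1 : μ N v2 ≤ mubarAux K1 (F.card - 2) + 1 := by linarith [hraise2, hFmu]
        nlinarith [mul_nonneg (by linarith : (0:ℝ) ≤ (F.card:ℝ) - 1) hmubt,
          mul_nonneg (by linarith : (0:ℝ) ≤ (F.card:ℝ)) hK10]
      · push_neg at hτ1
        set y : Fin N → ℝ := Function.update vF k (p N v2 k - 1) with hydef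
        have hyk : y k = p N v2 k - 1 := Function.update_self k _ vF
        have hyF : ∀ l ∈ F, y l = Lam := by
          intro l hl
          rw [hydef, Function.update_of_ne (ne_of_mem_of_not_mem hl hkF), hvFdef, memVec_mem hl]
        have hyo : ∀ s : Fin N, s ∉ F → s ≠ k → y s = 0 := by
          intro s hs hsk
          rw [hydef, Function.update_of_ne hsk, hvFdef, memVec_not hs]
        have hy2 : Function.update y k W0 = v2 := by
          rw [hydef, Function.update_idem]
        have hxky : x N y k = 0 := by
          by_contra hcon
          have h1 : x N y k = 1 := (hx01 N y k).resolve_left hcon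
          have hq := hple N y k h1
          rw [hyk] at hq
          obtain ⟨h2, h3⟩ := LemR N y k W0 h1 (by linarith)
          rw [hy2] at h2 h3
          linarith
        have hμy : μ N y ≤ μ N vF + (p N v2 k - 1) := by
          have hr := raise vF k (p N v2 k - 1)
          rw [← hydef, hvFk,
            wUzero _ _ _ (hne1 _ hkx),
            wUn _ _ _ _ (hne1 _ hxky), sub_zero] at hr
          have hmx : max (p N v2 k - 1) 0 = p N v2 k - 1 := max_eq_left (by linarith)
          rw [hmx] at hr
          linarith
        have hFy : ∀ l ∈ F, x N y l = 1 := by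
          intro l hl
          by_contra hcon
          have h0 : x N y l = 0 := hx0 _ _ _ hcon
          have hlk : l ≠ k := ne_of_mem_of_not_mem hl hkF
          have hg := gold y l k hlk
          rw [hyk, hyF l hl,
            wUzero _ _ _ (hne1 _ h0),
            wUzero _ _ _ (hne1 _ hxky)] at hg
          have hLamle := hLamBig (F.card - 2) (by omega)
          linarith [hμy, hFmu]
        have hpy : ∀ l ∈ F, p N y l ≤ mubarAux K1 (F.card - 2) + 2 * K1 := by
          intro l hl
          have hlk : l ≠ k := ne_of_mem_of_not_mem hl hkF
          have hg := gold y l k hlk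
          rw [hyk, hyF l hl, hFy l hl, wU1,
            wUzero _ _ _ (hne1 _ hxky)] at hg
          linarith [hμy, hFmu]
        have hμy2 : μ N y ≤ (F.card : ℝ) * (mubarAux K1 (F.card - 2) + 2 * K1) := by
          have h1 := (hμ N y).2
          have h2 : (∑ s, p N y s)
              ≤ ∑ s : Fin N, (if s ∈ F then mubarAux K1 (F.card - 2) + 2 * K1 else 0) := by
            refine Finset.sum_le_sum (fun s _ => ?_)
            by_cases hsF : s ∈ F
            · rw [if_pos hsF]; exact hpy s hsF
            · rw [if_neg hsF]
              by_cases hsk : s = k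
              · rw [hsk]; exact le_of_eq (hp0 N y k hxky)
              · exact hple0 N y s (hyo s hsF hsk)
          rw [Finset.sum_ite_mem, Finset.univ_inter, Finset.sum_const, nsmul_eq_mul] at h2
          linarith
        have hr := raise y k W0
        rw [hy2, hyk, hxk2, wU1,
          wUzero _ _ _ (hne1 _ hxky)] at hr
        linarith
    -- bound the new payment τ
    have hττ : p N v2 k
        ≤ 2 * (((F.card : ℝ) * (mubarAux K1 (F.card - 2) + 2 * K1) + 1) + 2 * K1) := by
      by_cases hτ0 : p N v2 k ≤ 0
      · nlinarith [mul_nonneg (by linarith : (0:ℝ) ≤ (F.card:ℝ)) (by linarith [hK10, hmubt] :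
          (0:ℝ) ≤ mubarAux K1 (F.card - 2) + 2 * K1), hK10]
      · push_neg at hτ0
        have hsumF : -(p N v2 k) ≤ ∑ s ∈ F, p N v2 s := by
          have h1 := (hμ N v2).1
          have h2 := (hμ N v2).2
          have h3 : (∑ s, p N v2 s) = (∑ s ∈ F, p N v2 s) + ∑ s ∈ Fᶜ, p N v2 s :=
            (Finset.sum_add_sum_compl F _).symm
          have h4 : ∑ s ∈ Fᶜ, p N v2 s ≤ ∑ s ∈ Fᶜ, (if s = k then p N v2 k else 0) := by
            refine Finset.sum_le_sum (fun s hs => ?_)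
            by_cases hsk : s = k
            · rw [if_pos hsk, hsk]
            · rw [if_neg hsk]
              exact hple0 N v2 s (hv2o s (Finset.mem_compl.mp hs) hsk)
          have h5 : ∑ s ∈ Fᶜ, (if s = k then p N v2 k else 0) = p N v2 k := by
            rw [Finset.sum_ite_eq' Fᶜ k (fun _ => p N v2 k),
              if_pos (Finset.mem_compl.mpr hkF)]
          rw [h3] at h2
          rw [h5] at h4
          linarith
        obtain ⟨l', hl'F, hl'⟩ : ∃ l' ∈ F, -(p N v2 k) / (F.card : ℝ) ≤ p N v2 l' := by
          by_contra hcon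
          push_neg at hcon
          have hlt : ∑ s ∈ F, p N v2 s < ∑ _s ∈ F, (-(p N v2 k) / (F.card : ℝ)) :=
            Finset.sum_lt_sum_of_nonempty ⟨l0, hl0F⟩ (fun s hs => hcon s hs)
          rw [Finset.sum_const, nsmul_eq_mul,
            mul_div_cancel₀ _ (by linarith : (F.card:ℝ) ≠ 0)] at hlt
          linarith
        have hl'k : k ≠ l' := (ne_of_mem_of_not_mem hl'F hkF).symm
        have hg := gold v2 k l' hl'k
        rw [hv2k, hv2F l' hl'F, hxk2, hFv2 l' hl'F, wU1, wU1] at hg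
        have hdiv : -(p N v2 k) / (F.card:ℝ) ≥ -(p N v2 k) / 2 := by
          rw [ge_iff_le, div_le_div_iff₀ (by norm_num) (by linarith)]
          nlinarith
        linarith [hBND]
    -- the new vector v3 with k at Lam
    set v3 : Fin N → ℝ := Function.update vF k Lam with hv3def
    have hv3eq : Function.update v2 k Lam = v3 := by
      rw [hv2def, Function.update_idem]
    have hcastt : ((F.card - 2 : ℕ) : ℝ) + 2 = (F.card : ℝ) := by
      have h : F.card - 2 + 2 = F.card := by omega
      exact_mod_cast congrArg (fun n : ℕ => (n : ℝ)) h
    have hsucc : mubarAux K1 (F.card - 2 + 1) = mubarAux K1 (F.card - 2)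
        + 2 * ((((F.card - 2 : ℕ) : ℝ) + 2) * (mubarAux K1 (F.card - 2) + 2 * K1) + 1 + 2 * K1)
        := by simp only [mubarAux]
    have hττ2 : p N v2 k ≤ mubarAux K1 (F.card - 2 + 1) := by
      rw [hsucc, hcastt]
      linarith [hττ, hmubt]
    have hτLam : p N v2 k < Lam := by
      have h1 : mubarAux K1 (F.card - 2 + 1) ≤ mubarAux K1 (B - 1) :=
        mubarAux_mono hK10 (by omega)
      rw [hLamdef]
      linarith [hττ2, hK10, hK0]
    obtain ⟨hxv3, hpv3⟩ := LemR N v2 k Lam hxk2 hτLam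
    rw [hv3eq] at hxv3 hpv3
    have hv3k : v3 k = Lam := Function.update_self k Lam vF
    have hraise3 : μ N v3 - p N v2 k ≤ μ N vF := by
      have hr := raise vF k Lam
      rw [← hv3def, hvFk, hxv3, hpv3, wU1,
        wUzero _ _ _ (hne1 _ hkx)] at hr
      linarith
    have hμ3 : μ N v3 ≤ mubarAux K1 (F.card - 2 + 1) := by
      have h1 : mubarAux K1 (F.card - 2) + p N v2 k ≤ mubarAux K1 (F.card - 2 + 1) := by
        rw [hsucc, hcastt]
        linarith [hττ]
      linarith [hraise3, hFmu]
    have hFv3 : ∀ l ∈ F, x N v3 l = 1 := by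
      intro l hl
      by_contra hcon
      have h0 : x N v3 l = 0 := hx0 _ _ _ hcon
      have hlk : l ≠ k := ne_of_mem_of_not_mem hl hkF
      have hv3F : v3 l = Lam := by
        rw [hv3def, Function.update_of_ne hlk, hvFdef, memVec_mem hl]
      have hg := gold v3 l k hlk
      rw [hv3k, hv3F, hxv3, hpv3, wU1,
        wUzero _ _ _ (hne1 _ h0)] at hg
      have hLamle := hLamBig (F.card - 2) (by omega)
      linarith [hraise3, hFmu]
    have hv3mem : memVec N (insert k F) Lam = v3 := by
      rw [hv3def, hvFdef, memVec_insert]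
    refine ⟨insert k F, Finset.card_insert_of_notMem hkF, ?_, ?_⟩
    · intro l hl
      rw [hv3mem]
      rcases Finset.mem_insert.mp hl with h | h
      · rw [h]; exact hxv3
      · exact hFv3 l h
    · rw [hv3mem, Finset.card_insert_of_notMem hkF]
      have h : F.card + 1 - 2 = F.card - 2 + 1 := by omega
      rw [h]
      exact hμ3
  -- iterate -------------------------------------------------------------------
  have iter : ∀ d : ℕ, 2 + d ≤ B + 1 → ∃ F : Finset (Fin N), F.card = 2 + d ∧
      (∀ l ∈ F, x N (memVec N F Lam) l = 1) ∧
      μ N (memVec N F Lam) ≤ mubarAux K1 d := by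
    intro d
    induction d with
    | zero =>
      intro _
      refine ⟨{z0, z1}, Finset.card_pair hz01, hbase_conf, ?_⟩
      exact hbase_mu
    | succ d ih =>
      intro hle
      obtain ⟨F, hcard, hconf, hmu⟩ := ih (by omega)
      obtain ⟨F', hcard', hconf', hmu'⟩ := step F (by omega) (by omega) hconf
        (by
          have h : F.card - 2 = d := by omega
          rw [h]; exact hmu)
      refine ⟨F', by omega, hconf', ?_⟩
      have h : F'.card - 2 = d + 1 := by omega
      rw [h] at hmu'
      exact hmu'
  -- the final contradiction ----------------------------------------------------
  obtain ⟨F, hcard, hconf, _⟩ := iter (B - 1) (by omega)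
  have hsub : F ⊆ Finset.univ.filter (fun s : Fin N => x N (memVec N F Lam) s = 1) :=
    fun l hl => Finset.mem_filter.mpr ⟨Finset.mem_univ l, hconf l hl⟩
  have h1 := Finset.card_le_card hsub
  have h2 := hblock N (memVec N F Lam)
  rw [hcard] at h1
  omega
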